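/- If f : D → [-∞,+∞) is (T,t)-convex, (T₁,t₁)-convex and (T₂,t₂)-convex (with T, T₁, T₂ endomorphisms of X and t, t₁, t₂ ∈ [0,1]), then f is (S,s)-convex where S := T∘T₁ + (I−T)∘T₂ and s := t·t₁ + (1−t)·t₂. -/

import Mathlib

/-! The `S`-combination of `x` and `y` is the `T`-combination of their `T₁`- and
`T₂`-combinations, so `T`-convexity followed by `T₁`- and `T₂`-convexity bounds `f` there by
a combination of `f x` and `f y` whose coefficients multiply out to `s` and `1 - s`.
`EReal` is not a semiring, but the distributive laws needed hold because all these
coefficients are nonnegative. -/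

section TConvex

variable {X : Type*} [AddCommGroup X]

def tComb (T : X →+ X) (x y : X) : X := T x + (y - T y)

def IsTConvex (T : X →+ X) (D : Set X) : Prop :=
  ∀ x ∈ D, ∀ y ∈ D, tComb T x y ∈ D

def TConvexOn (T : X →+ X) (t : ℝ) (D : Set X) (f : X → EReal) : Prop :=
  IsTConvex T D ∧
    ∀ x ∈ D, ∀ y ∈ D, f (tComb T x y) ≤ (t : EReal) * f x + ((1 - t : ℝ) : EReal) * f y

theorem tComb_comp_add_id_sub_comp (T T₁ T₂ : X →+ X) (x y : X) :
    tComb (T.comp T₁ + (AddMonoidHom.id X - T).comp T₂) x y =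
      tComb T (tComb T₁ x y) (tComb T₂ x y) := by
  simp only [tComb, AddMonoidHom.add_apply, AddMonoidHom.comp_apply, AddMonoidHom.sub_apply,
    AddMonoidHom.id_apply, map_add, map_sub]
  abel

end TConvex

namespace EReal

theorem coe_mul_add_of_nonneg {r : ℝ} (hr : 0 ≤ r) (a b : EReal) :
    (r : EReal) * (a + b) = r * a + r * b :=
  left_distrib_of_nonneg_of_ne_top (mod_cast hr) (coe_ne_top r) a b

theorem combo_le_combo {t : ℝ} (ht : t ∈ Set.Icc (0 : ℝ) 1) {a a' b b' : EReal}
    (ha : a ≤ a') (hb : b ≤ b') :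
    (t : EReal) * a + ((1 - t : ℝ) : EReal) * b ≤ t * a' + ((1 - t : ℝ) : EReal) * b' :=
  add_le_add (mul_le_mul_of_nonneg_left ha (mod_cast ht.1))
    (mul_le_mul_of_nonneg_left hb (mod_cast _root_.sub_nonneg.2 ht.2))

theorem combo_combo {t t₁ t₂ : ℝ} (ht : t ∈ Set.Icc (0 : ℝ) 1) (ht₁ : t₁ ∈ Set.Icc (0 : ℝ) 1)
    (ht₂ : t₂ ∈ Set.Icc (0 : ℝ) 1) (a b : EReal) :
    (t : EReal) * (t₁ * a + ((1 - t₁ : ℝ) : EReal) * b) +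
        ((1 - t : ℝ) : EReal) * (t₂ * a + ((1 - t₂ : ℝ) : EReal) * b) =
      ((t * t₁ + (1 - t) * t₂ : ℝ) : EReal) * a +
        ((1 - (t * t₁ + (1 - t) * t₂) : ℝ) : EReal) * b := by
  obtain ⟨ht0, ht1⟩ := ht
  obtain ⟨ht₁0, ht₁1⟩ := ht₁
  obtain ⟨ht₂0, ht₂1⟩ := ht₂
  have hsplit : ((1 - (t * t₁ + (1 - t) * t₂) : ℝ) : EReal) =
      ((t * (1 - t₁) : ℝ) : EReal) + (((1 - t) * (1 - t₂) : ℝ) : EReal) := by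
    rw [← coe_add]; congr 1; ring
  rw [coe_add, hsplit, right_distrib_of_nonneg (mod_cast mul_nonneg ht0 ht₁0)
      (mod_cast mul_nonneg (_root_.sub_nonneg.2 ht1) ht₂0),
    right_distrib_of_nonneg (mod_cast mul_nonneg ht0 (_root_.sub_nonneg.2 ht₁1))
      (mod_cast mul_nonneg (_root_.sub_nonneg.2 ht1) (_root_.sub_nonneg.2 ht₂1)),
    coe_mul_add_of_nonneg ht0, coe_mul_add_of_nonneg (_root_.sub_nonneg.2 ht1)]
  simp only [coe_mul, mul_assoc]
  abel

end EReal

theorem TConvexOn.comp_add_id_sub_comp {X : Type*} [AddCommGroup X] {D : Set X}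
    {f : X → EReal} {T T₁ T₂ : X →+ X} {t t₁ t₂ : ℝ} (ht : t ∈ Set.Icc (0 : ℝ) 1)
    (ht₁ : t₁ ∈ Set.Icc (0 : ℝ) 1) (ht₂ : t₂ ∈ Set.Icc (0 : ℝ) 1)
    (hf : TConvexOn T t D f) (hf₁ : TConvexOn T₁ t₁ D f) (hf₂ : TConvexOn T₂ t₂ D f) :
    TConvexOn (T.comp T₁ + (AddMonoidHom.id X - T).comp T₂) (t * t₁ + (1 - t) * t₂) D f := by
  refine ⟨fun x hx y hy => ?_, fun x hx y hy => ?_⟩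
  · rw [tComb_comp_add_id_sub_comp]
    exact hf.1 _ (hf₁.1 x hx y hy) _ (hf₂.1 x hx y hy)
  · rw [tComb_comp_add_id_sub_comp, ← EReal.combo_combo ht ht₁ ht₂]
    exact (hf.2 _ (hf₁.1 x hx y hy) _ (hf₂.1 x hx y hy)).trans
      (EReal.combo_le_combo ht (hf₁.2 x hx y hy) (hf₂.2 x hx y hy))

/-- If `f` is `(T,t)`-, `(T₁,t₁)`- and `(T₂,t₂)`-convex, then `f`
is `(S,s)`-convex with `S = T∘T₁ + (I−T)∘T₂` and `s = t·t₁ + (1−t)·t₂`. -/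
theorem stmt17 {X : Type*} [AddCommGroup X] (D : Set X) (f : X → EReal)
    (T T₁ T₂ : X →+ X) (t t₁ t₂ : ℝ)
    (ht : t ∈ Set.Icc (0 : ℝ) 1) (ht₁ : t₁ ∈ Set.Icc (0 : ℝ) 1)
    (ht₂ : t₂ ∈ Set.Icc (0 : ℝ) 1)
    (hDT : ∀ x ∈ D, ∀ y ∈ D, T x + (y - T y) ∈ D)
    (hDT₁ : ∀ x ∈ D, ∀ y ∈ D, T₁ x + (y - T₁ y) ∈ D)
    (hDT₂ : ∀ x ∈ D, ∀ y ∈ D, T₂ x + (y - T₂ y) ∈ D)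
    (hT : ∀ x ∈ D, ∀ y ∈ D,
      f (T x + (y - T y)) ≤ (t : EReal) * f x + ((1 - t : ℝ) : EReal) * f y)
    (hT₁ : ∀ x ∈ D, ∀ y ∈ D,
      f (T₁ x + (y - T₁ y)) ≤ (t₁ : EReal) * f x + ((1 - t₁ : ℝ) : EReal) * f y)
    (hT₂ : ∀ x ∈ D, ∀ y ∈ D,
      f (T₂ x + (y - T₂ y)) ≤ (t₂ : EReal) * f x + ((1 - t₂ : ℝ) : EReal) * f y)
    (S : X →+ X) (hS : S = T.comp T₁ + (AddMonoidHom.id X - T).comp T₂)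
    (s : ℝ) (hs : s = t * t₁ + (1 - t) * t₂) :
    (∀ x ∈ D, ∀ y ∈ D, S x + (y - S y) ∈ D) ∧
    (∀ x ∈ D, ∀ y ∈ D,
      f (S x + (y - S y)) ≤ (s : EReal) * f x + ((1 - s : ℝ) : EReal) * f y) := by
  subst hS hs
  exact TConvexOn.comp_add_id_sub_comp ht ht₁ ht₂ ⟨hDT, hT⟩ ⟨hDT₁, hT₁⟩ ⟨hDT₂, hT₂⟩
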